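/- arXiv:1610.02592 — 5 statements merged into one kernel-verified Lean document; each statement's English description precedes it below -/
import Mathlib

section
/- Let a, b, c, d ≥ 0 be real numbers and let k > 1 be a real number. Then cosh a + cosh b = cosh c + cosh d and cosh(ka) + cosh(kb) = cosh(kc) + cosh(kd) hold simultaneously if and only if {a,b} = {c,d}, i.e. (a = c and b = d) or (a = d and b = c). -/
/-!
Order the pairs so that `b ≤ d ≤ c ≤ a`. By the Cauchy mean value theorem, the increments of
`cosh (k t)` over `[b, d]` and `[c, a]` are those of `cosh t` times `k sinh (k ξ) / sinh ξ` at
intermediate points `ξ`, and this ratio is strictly increasing on `(0, ∞)` when `k > 1`. Since the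
first equation makes the two increments of `cosh t` equal, the increment over `[c, a]` of
`cosh (k t)` is strictly larger unless the intervals degenerate, contradicting the second equation.
-/

open Real Set

namespace Real

lemma sinh_mul_mul_cosh_lt_mul_cosh_mul_mul_sinh {k x : ℝ} (hk : 1 < k) (hx : 0 < x) :
    sinh (k * x) * cosh x < k * cosh (k * x) * sinh x := by
  set G : ℝ → ℝ := fun t => k * cosh (k * t) * sinh t - sinh (k * t) * cosh t
  have hG : ∀ t, HasDerivAt G ((k ^ 2 - 1) * (sinh (k * t) * sinh t)) t := fun t => by
    have hkt : HasDerivAt (fun s => k * s) k t := hasDerivAt_const_mul k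
    exact (((hkt.cosh.const_mul k).mul (hasDerivAt_sinh t)).sub
      (hkt.sinh.mul (hasDerivAt_cosh t))).congr_deriv (by ring)
  have hmono : StrictMonoOn G (Ici 0) := by
    refine strictMonoOn_of_deriv_pos (convex_Ici 0)
      (fun t _ => (hG t).continuousAt.continuousWithinAt) fun t ht => ?_
    rw [interior_Ici, mem_Ioi] at ht
    rw [(hG t).deriv]
    have : 0 < k ^ 2 - 1 := by nlinarith
    have : 0 < sinh (k * t) := sinh_pos_iff.2 (by positivity)
    have : 0 < sinh t := sinh_pos_iff.2 ht
    positivity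
  have := hmono self_mem_Ici hx.le hx
  simp only [G, mul_zero, sinh_zero, cosh_zero] at this
  linarith

lemma strictMonoOn_sinh_mul_div_sinh {k : ℝ} (hk : 1 < k) :
    StrictMonoOn (fun x => sinh (k * x) / sinh x) (Ioi 0) := by
  have hderiv : ∀ x > 0, HasDerivAt (fun x => sinh (k * x) / sinh x)
      ((cosh (k * x) * k * sinh x - sinh (k * x) * cosh x) / sinh x ^ 2) x := fun x hx =>
    (hasDerivAt_const_mul k).sinh.div (hasDerivAt_sinh x) (sinh_pos_iff.2 hx).ne'
  refine strictMonoOn_of_deriv_pos (convex_Ioi 0)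
    (fun x hx => (hderiv x hx).continuousAt.continuousWithinAt) fun x hx => ?_
  rw [interior_Ioi, mem_Ioi] at hx
  have hsx : 0 < sinh x := sinh_pos_iff.2 hx
  rw [(hderiv x hx).deriv]
  refine div_pos ?_ (by positivity)
  linarith [sinh_mul_mul_cosh_lt_mul_cosh_mul_mul_sinh hk hx]

lemma exists_cosh_mul_sub_eq (k : ℝ) {u v : ℝ} (hu : 0 ≤ u) (huv : u < v) :
    ∃ ξ ∈ Ioo u v,
      cosh (k * v) - cosh (k * u) = k * (sinh (k * ξ) / sinh ξ) * (cosh v - cosh u) := by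
  obtain ⟨ξ, hξ, h⟩ := exists_ratio_hasDerivAt_eq_ratio_slope cosh sinh huv
    continuous_cosh.continuousOn (fun x _ => hasDerivAt_cosh x) (fun t => cosh (k * t))
    (fun t => sinh (k * t) * k) (continuous_cosh.comp (continuous_const_mul k)).continuousOn
    (fun x _ => (hasDerivAt_const_mul k).cosh)
  have hsξ : 0 < sinh ξ := sinh_pos_iff.2 (hu.trans_lt hξ.1)
  refine ⟨ξ, hξ, ?_⟩
  field_simp
  linarith

lemma cosh_mul_add_cosh_mul_lt {a b c d k : ℝ} (hk : 1 < k) (hb : 0 ≤ b) (hbd : b < d)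
    (hdc : d ≤ c) (hca : c < a) (h : cosh a + cosh b = cosh c + cosh d) :
    cosh (k * c) + cosh (k * d) < cosh (k * a) + cosh (k * b) := by
  obtain ⟨ξ, hξ, hbd'⟩ := exists_cosh_mul_sub_eq k hb hbd
  obtain ⟨η, hη, hca'⟩ := exists_cosh_mul_sub_eq k (hb.trans (hbd.le.trans hdc)) hca
  have hξ0 : 0 < ξ := hb.trans_lt hξ.1
  have hratio : sinh (k * ξ) / sinh ξ < sinh (k * η) / sinh η :=
    strictMonoOn_sinh_mul_div_sinh hk hξ0 (hξ0.trans (hξ.2.trans_le (hdc.trans hη.1.le)))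
      (hξ.2.trans_le (hdc.trans hη.1.le))
  have hΔ : 0 < cosh d - cosh b := sub_pos.2 (cosh_strictMonoOn hb (hb.trans hbd.le) hbd)
  have : k * (sinh (k * ξ) / sinh ξ) * (cosh d - cosh b) <
      k * (sinh (k * η) / sinh η) * (cosh a - cosh c) := by
    rw [show cosh a - cosh c = cosh d - cosh b by linarith]
    gcongr
  linarith

lemma eq_and_eq_of_cosh_add_eq {a b c d k : ℝ} (hb : 0 ≤ b) (hd : 0 ≤ d) (hk : 1 < k)
    (hdc : d ≤ c) (hca : c ≤ a) (h₁ : cosh a + cosh b = cosh c + cosh d)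
    (h₂ : cosh (k * a) + cosh (k * b) = cosh (k * c) + cosh (k * d)) :
    a = c ∧ b = d := by
  have hc : 0 ≤ c := hd.trans hdc
  rcases hca.eq_or_lt with rfl | hca
  · exact ⟨rfl, cosh_strictMonoOn.injOn hb hd (by linarith)⟩
  · have hbd : b < d := by
      have : cosh c < cosh a := cosh_strictMonoOn hc (hc.trans hca.le) hca
      exact (cosh_strictMonoOn.lt_iff_lt hb hd).1 (by linarith)
    linarith [cosh_mul_add_cosh_mul_lt hk hb hbd hdc hca h₁]

end Real

/-- For a,b,c,d ≥ 0 and k > 1, the two equations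
cosh a + cosh b = cosh c + cosh d and cosh(ka) + cosh(kb) = cosh(kc) + cosh(kd)
hold simultaneously iff {a,b} = {c,d}. -/
theorem cosh_sum_rigidity (a b c d k : ℝ)
    (ha : 0 ≤ a) (hb : 0 ≤ b) (hc : 0 ≤ c) (hd : 0 ≤ d) (hk : 1 < k) :
    (Real.cosh a + Real.cosh b = Real.cosh c + Real.cosh d ∧
      Real.cosh (k * a) + Real.cosh (k * b) = Real.cosh (k * c) + Real.cosh (k * d)) ↔
    ((a = c ∧ b = d) ∨ (a = d ∧ b = c)) := by
  constructor
  · rintro ⟨h₁, h₂⟩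
    wlog hba : b ≤ a generalizing a b
    · rcases this b a hb ha (by linarith) (by linarith) (le_of_not_ge hba) with h | h
      exacts [Or.inr ⟨h.2, h.1⟩, Or.inl ⟨h.2, h.1⟩]
    wlog hdc : d ≤ c generalizing c d
    · rcases this d c hd hc (by linarith) (by linarith) (le_of_not_ge hdc) with h | h
      exacts [Or.inr h, Or.inl h]
    rcases le_total c a with hca | hac
    · exact Or.inl (eq_and_eq_of_cosh_add_eq hb hd hk hdc hca h₁ h₂)
    · obtain ⟨rfl, rfl⟩ := eq_and_eq_of_cosh_add_eq hd hb hk hba hac h₁.symm h₂.symm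
      exact Or.inl ⟨rfl, rfl⟩
  · rintro (⟨rfl, rfl⟩ | ⟨rfl, rfl⟩)
    exacts [⟨rfl, rfl⟩, ⟨add_comm _ _, add_comm _ _⟩]
end

section
/- Let z, w ∈ ℂ with Im z ≥ 0 and Im w ≥ 0, and let λ > 0 be a real number. If |p + q·z| = λ·|p + q·w| for all integers p and q, then λ = 1 and z = w. -/
/-!
Taking `(p, q) = (1, 0)` gives `λ = 1`. The slopes `(0, 1)` and `(1, 1)` then give `|z| = |w|` and
`|1 + z| = |1 + w|`; since `|1 + z|² = 1 + 2 Re z + |z|²`, the real parts agree, and the imaginary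
parts, having the same square and the same sign, agree as well.
-/

open Complex

namespace Complex

theorem re_eq_of_norm_eq_of_norm_one_add_eq {z w : ℂ} (h₀ : ‖z‖ = ‖w‖)
    (h₁ : ‖1 + z‖ = ‖1 + w‖) : z.re = w.re := by
  have hsq₀ : normSq z = normSq w := by rw [normSq_eq_norm_sq, normSq_eq_norm_sq, h₀]
  have hsq₁ : normSq (1 + z) = normSq (1 + w) := by rw [normSq_eq_norm_sq, normSq_eq_norm_sq, h₁]
  simp only [normSq_apply, add_re, add_im, one_re, one_im] at hsq₀ hsq₁
  linarith

theorem im_eq_of_norm_eq_of_re_eq {z w : ℂ} (hz : 0 ≤ z.im) (hw : 0 ≤ w.im)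
    (hnorm : ‖z‖ = ‖w‖) (hre : z.re = w.re) : z.im = w.im := by
  have him_sq : z.im ^ 2 = w.im ^ 2 := by
    rw [← sq_norm_sub_sq_re, ← sq_norm_sub_sq_re, hnorm, hre]
  exact (sq_eq_sq₀ hz hw).mp him_sq

theorem eq_of_norm_eq_of_norm_one_add_eq {z w : ℂ} (hz : 0 ≤ z.im) (hw : 0 ≤ w.im)
    (h₀ : ‖z‖ = ‖w‖) (h₁ : ‖1 + z‖ = ‖1 + w‖) : z = w :=
  have hre := re_eq_of_norm_eq_of_norm_one_add_eq h₀ h₁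
  ext hre (im_eq_of_norm_eq_of_re_eq hz hw h₀ hre)

end Complex

theorem torus_functionals_injective_general (z w : ℂ) (hz : 0 ≤ z.im) (hw : 0 ≤ w.im)
    (lam : ℝ)
    (h : ∀ p q : ℤ, ‖(p : ℂ) + (q : ℂ) * z‖ =
      lam * ‖(p : ℂ) + (q : ℂ) * w‖) :
    lam = 1 ∧ z = w := by
  have hlam : lam = 1 := by simpa using (h 1 0).symm
  subst hlam
  have h₀ : ‖z‖ = ‖w‖ := by simpa using h 0 1
  have h₁ : ‖1 + z‖ = ‖1 + w‖ := by simpa using h 1 1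
  exact ⟨rfl, eq_of_norm_eq_of_norm_one_add_eq hz hw h₀ h₁⟩

/-- If z, w lie in the closed upper half-plane, λ > 0, and
|p + q·z| = λ·|p + q·w| for all integers p, q, then λ = 1 and z = w. -/
theorem torus_functionals_injective (z w : ℂ) (hz : 0 ≤ z.im) (hw : 0 ≤ w.im)
    (lam : ℝ) (hlam : 0 < lam)
    (h : ∀ p q : ℤ, ‖(p : ℂ) + (q : ℂ) * z‖ =
      lam * ‖(p : ℂ) + (q : ℂ) * w‖) :
    lam = 1 ∧ z = w :=
  torus_functionals_injective_general z w hz hw lam h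
end

section
/- Let n ≥ 1 and let M be an n×n real matrix with non-negative entries such that no column of M is zero (for every j there is an i with M_{ij} > 0). Then there exist a vector v ∈ ℝⁿ with non-negative entries summing to 1 and a real number λ > 0 such that Mv = λv. -/
/-!
Brouwer's theorem is replaced by a compactness argument. For a matrix `A` with positive entries,
maximize `l` over the compact set of pairs `(v, l)` with `v` in the simplex, `0 ≤ l ≤ ∑ᵢⱼ Aᵢⱼ`
and `l • v ≤ A v`. If a maximizer were not an eigenpair, `A v - l • v` would be non-negative and
non-zero, so `l • A v < A (A v)` in every coordinate, and the normalization of `A v` would admit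
a larger `l`. A non-negative `M` is the limit of the positive matrices `M + ε J` (`J` the all-ones
matrix), and having an eigenvector in the compact simplex is a closed condition on the matrix.
The eigenvalue is then `∑ᵢ (M v)ᵢ = ∑ⱼ (∑ᵢ Mᵢⱼ) vⱼ`, positive because no column of `M` is zero.
-/

open Filter Matrix Topology

lemma Matrix.sum_mulVec_eq_sum_colSum_mul {R m ι : Type*} [CommSemiring R] [Fintype m]
    [Fintype ι] (A : Matrix m ι R) (v : ι → R) :
    ∑ i, (A *ᵥ v) i = ∑ j, (∑ i, A i j) * v j := by
  simp only [mulVec, dotProduct, Finset.sum_mul]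
  exact Finset.sum_comm

section LinearOrderedField

variable {𝕜 ι : Type*} [Field 𝕜] [LinearOrder 𝕜] [IsStrictOrderedRing 𝕜] [Fintype ι]

lemma pos_of_mem_stdSimplex {v : ι → 𝕜} (hv : v ∈ stdSimplex 𝕜 ι) : 0 < v := by
  refine lt_of_le_of_ne (fun i => hv.1 i) ?_
  rintro rfl
  simpa using hv.2

lemma inv_sum_smul_mem_stdSimplex {w : ι → 𝕜} (hw : 0 ≤ w) (hs : 0 < ∑ i, w i) :
    (∑ i, w i)⁻¹ • w ∈ stdSimplex 𝕜 ι :=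
  ⟨fun i => mul_nonneg (inv_nonneg.2 hs.le) (hw i), by
    simp only [Pi.smul_apply, smul_eq_mul, ← Finset.mul_sum, inv_mul_cancel₀ hs.ne']⟩

namespace Matrix

variable {A : Matrix ι ι 𝕜}

lemma mulVec_nonneg (hA : ∀ i j, 0 ≤ A i j) {v : ι → 𝕜} (hv : 0 ≤ v) : 0 ≤ A *ᵥ v :=
  fun i => Finset.sum_nonneg fun j _ => mul_nonneg (hA i j) (hv j)

lemma mulVec_pos_of_pos (hA : ∀ i j, 0 < A i j) {u : ι → 𝕜} (hu : 0 < u) (i : ι) :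
    0 < (A *ᵥ u) i := by
  obtain ⟨hu, j, hj⟩ := Pi.lt_def.1 hu
  exact Finset.sum_pos' (fun k _ => mul_nonneg (hA i k).le (hu k))
    ⟨j, Finset.mem_univ j, mul_pos (hA i j) hj⟩

lemma le_sum_mulVec_of_smul_le {v : ι → 𝕜} {l : 𝕜} (hv : v ∈ stdSimplex 𝕜 ι)
    (h : l • v ≤ A *ᵥ v) : l ≤ ∑ i, (A *ᵥ v) i :=
  calc l = ∑ i, (l • v) i := by simp [← Finset.mul_sum, hv.2]
    _ ≤ ∑ i, (A *ᵥ v) i := Finset.sum_le_sum fun i _ => h i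

lemma sum_mulVec_le_sum_sum (hA : ∀ i j, 0 ≤ A i j) {v : ι → 𝕜} (hv : v ∈ stdSimplex 𝕜 ι) :
    ∑ i, (A *ᵥ v) i ≤ ∑ j, ∑ i, A i j := by
  rw [sum_mulVec_eq_sum_colSum_mul]
  gcongr with j
  exact mul_le_of_le_one_right (Finset.sum_nonneg fun i _ => hA i j)
    (mem_Icc_of_mem_stdSimplex hv j).2

lemma sum_mulVec_pos (hA : ∀ i j, 0 ≤ A i j) (hcol : ∀ j, ∃ i, 0 < A i j) {v : ι → 𝕜}
    (hv : v ∈ stdSimplex 𝕜 ι) : 0 < ∑ i, (A *ᵥ v) i := by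
  obtain ⟨-, j, hj⟩ := Pi.lt_def.1 (pos_of_mem_stdSimplex hv)
  obtain ⟨i, hi⟩ := hcol j
  have hcolSum : 0 < ∑ k, A k j :=
    Finset.sum_pos' (fun k _ => hA k j) ⟨i, Finset.mem_univ i, hi⟩
  rw [sum_mulVec_eq_sum_colSum_mul]
  exact Finset.sum_pos' (fun k _ => mul_nonneg (Finset.sum_nonneg fun i _ => hA i k) (hv.1 k))
    ⟨j, Finset.mem_univ j, mul_pos hcolSum hj⟩

end Matrix

end LinearOrderedField

lemma exists_gt_forall_mul_lt {ι : Type*} [Finite ι] {a b : ι → ℝ} {l : ℝ}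
    (h : ∀ i, l * a i < b i) : ∃ t > l, ∀ i, t * a i < b i := by
  have hnhds : ∀ᶠ t in 𝓝 l, ∀ i, t * a i < b i := eventually_all.2 fun i =>
    (continuous_mul_const (a i)).continuousAt.eventually_lt continuousAt_const (h i)
  obtain ⟨t, ht, hlt⟩ := ((hnhds.filter_mono nhdsWithin_le_nhds).and
    (self_mem_nhdsWithin : ∀ᶠ t in 𝓝[>] l, l < t)).exists
  exact ⟨t, hlt, ht⟩

namespace Matrix

variable {ι : Type*} [Fintype ι]

/-- On the simplex the eigenvalue is forced to be `∑ i, (A *ᵥ v) i`; writing it this way makes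
the condition closed in `A`. -/
def HasSimplexEigenvector (A : Matrix ι ι ℝ) : Prop :=
  ∃ v ∈ stdSimplex ℝ ι, A *ᵥ v = (∑ i, (A *ᵥ v) i) • v

lemma hasSimplexEigenvector_iff {A : Matrix ι ι ℝ} :
    HasSimplexEigenvector A ↔ ∃ v ∈ stdSimplex ℝ ι, ∃ l : ℝ, A *ᵥ v = l • v := by
  refine ⟨fun ⟨v, hv, h⟩ => ⟨v, hv, _, h⟩, fun ⟨v, hv, l, h⟩ => ⟨v, hv, ?_⟩⟩
  have hl : ∑ i, (A *ᵥ v) i = l := by simp [h, ← Finset.mul_sum, hv.2]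
  rwa [hl]

lemma isClosed_setOf_hasSimplexEigenvector :
    IsClosed {A : Matrix ι ι ℝ | HasSimplexEigenvector A} := by
  have : CompactSpace (stdSimplex ℝ ι) := isCompact_iff_compactSpace.1 (isCompact_stdSimplex ℝ ι)
  have hfst : {A : Matrix ι ι ℝ | HasSimplexEigenvector A} = Prod.fst ''
      {p : Matrix ι ι ℝ × stdSimplex ℝ ι | p.1 *ᵥ p.2 = (∑ i, (p.1 *ᵥ p.2) i) • (p.2 : ι → ℝ)} := by
    ext A
    exact ⟨fun ⟨v, hv, h⟩ => ⟨(A, ⟨v, hv⟩), h, rfl⟩, fun ⟨p, h, hp⟩ => hp ▸ ⟨p.2, p.2.2, h⟩⟩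
  rw [hfst]
  exact isClosedMap_fst_of_compactSpace _ (isClosed_eq (by fun_prop) (by fun_prop))

lemma exists_smul_le_mulVec_of_ne {A : Matrix ι ι ℝ} (hA : ∀ i j, 0 < A i j) {v : ι → ℝ}
    {l : ℝ} (hv : v ∈ stdSimplex ℝ ι) (hle : l • v ≤ A *ᵥ v) (hne : A *ᵥ v ≠ l • v) :
    ∃ y ∈ stdSimplex ℝ ι, ∃ t > l, t • y ≤ A *ᵥ y := by
  set w := A *ᵥ v
  have hw : ∀ i, 0 < w i := mulVec_pos_of_pos hA (pos_of_mem_stdSimplex hv)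
  -- `A *ᵥ w - l • w = A *ᵥ (w - l • v)`, and `w - l • v` is non-negative and non-zero
  have hAw : ∀ i, l * w i < (A *ᵥ w) i := fun i => by
    simpa [w, mulVec_sub, mulVec_smul] using
      mulVec_pos_of_pos hA (sub_pos.2 (lt_of_le_of_ne hle hne.symm)) i
  obtain ⟨t, hlt, ht⟩ := exists_gt_forall_mul_lt hAw
  set s := ∑ i, w i
  have hs : 0 < s := by
    obtain ⟨-, j, -⟩ := Pi.lt_def.1 (pos_of_mem_stdSimplex hv)
    exact Finset.sum_pos (fun i _ => hw i) ⟨j, Finset.mem_univ j⟩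
  refine ⟨s⁻¹ • w, inv_sum_smul_mem_stdSimplex (fun i => (hw i).le) hs, t, hlt, fun i => ?_⟩
  simp only [mulVec_smul, Pi.smul_apply, smul_eq_mul, mul_left_comm t]
  exact mul_le_mul_of_nonneg_left (ht i).le (inv_nonneg.2 hs.le)

lemma hasSimplexEigenvector_of_pos [Nonempty ι] {A : Matrix ι ι ℝ} (hA : ∀ i j, 0 < A i j) :
    HasSimplexEigenvector A := by
  classical
  have hA₀ : ∀ i j, 0 ≤ A i j := fun i j => (hA i j).le
  set C := ∑ j, ∑ i, A i j
  set K := {p : (ι → ℝ) × ℝ | p.1 ∈ stdSimplex ℝ ι ∧ p.2 ∈ Set.Icc 0 C ∧ p.2 • p.1 ≤ A *ᵥ p.1}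
  have hK : IsCompact K := by
    refine ((isCompact_stdSimplex ℝ ι).prod isCompact_Icc).of_isClosed_subset ?_
      fun p hp => ⟨hp.1, hp.2.1⟩
    exact ((isClosed_stdSimplex ℝ ι).preimage continuous_fst).inter
      ((isClosed_Icc.preimage continuous_snd).inter (isClosed_le (continuous_snd.smul
        continuous_fst) (continuous_const.matrix_mulVec continuous_fst)))
  obtain ⟨i₀⟩ := ‹Nonempty ι›
  have hK₀ : (Pi.single i₀ 1, 0) ∈ K := by
    refine ⟨single_mem_stdSimplex ℝ i₀, ⟨le_rfl, ?_⟩, ?_⟩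
    · exact Finset.sum_nonneg fun j _ => Finset.sum_nonneg fun i _ => hA₀ i j
    · simpa using mulVec_nonneg hA₀ (single_mem_stdSimplex ℝ i₀).1
  obtain ⟨⟨v, l⟩, ⟨hv, hl, hle⟩, hmax⟩ := hK.exists_isMaxOn ⟨_, hK₀⟩ continuous_snd.continuousOn
  refine hasSimplexEigenvector_iff.2 ⟨v, hv, l, by_contra fun hne => ?_⟩
  obtain ⟨y, hy, t, hlt, hty⟩ := exists_smul_le_mulVec_of_ne hA hv hle hne
  have htC : t ≤ C := (le_sum_mulVec_of_smul_le hy hty).trans (sum_mulVec_le_sum_sum hA₀ hy)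
  exact hlt.not_ge (hmax (a := (y, t)) ⟨hy, ⟨hl.1.trans hlt.le, htC⟩, hty⟩)

end Matrix

/-- A non-negative real square matrix with no zero column has a non-negative eigenvector
(lying in the standard simplex) with a positive eigenvalue. -/
theorem nonneg_matrix_has_nonneg_eigenvector (n : ℕ) (hn : 1 ≤ n)
    (M : Matrix (Fin n) (Fin n) ℝ) (hM : ∀ i j, 0 ≤ M i j)
    (hcol : ∀ j, ∃ i, 0 < M i j) :
    ∃ (v : Fin n → ℝ) (lam : ℝ), (∀ i, 0 ≤ v i) ∧ (∑ i, v i) = 1 ∧ 0 < lam ∧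
      M.mulVec v = lam • v := by
  have : Nonempty (Fin n) := ⟨⟨0, hn⟩⟩
  set J : Matrix (Fin n) (Fin n) ℝ := of fun _ _ => 1
  have hpert : ∀ ε : ℝ, 0 < ε → HasSimplexEigenvector (M + ε • J) := fun ε hε =>
    hasSimplexEigenvector_of_pos fun i j => by simpa [J] using add_pos_of_nonneg_of_pos (hM i j) hε
  have hlim : Tendsto (fun ε : ℝ => M + ε • J) (𝓝[>] 0) (𝓝 M) :=
    (Continuous.tendsto' (by fun_prop) 0 M (by simp)).mono_left nhdsWithin_le_nhds
  obtain ⟨v, hv, heig⟩ := isClosed_setOf_hasSimplexEigenvector.mem_of_tendsto hlim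
    (eventually_nhdsWithin_of_forall fun ε hε => hpert ε hε)
  exact ⟨v, _, hv.1, hv.2, sum_mulVec_pos hM hcol hv, heig⟩
end

section
/- Let U = {(t,θ) ∈ ℝ × (0,π) : (1 + e^t·cot θ)² < e^{2t}/sin²θ}. For (t,θ) ∈ U set R = e^t/sin θ and C = −e^t·cot θ, and define t' = (1/2)·log(R² − (C−1)²) and θ' = arccos((1−C)/R) ∈ (0,π). Then the map Φ : U → ℝ × (0,π), Φ(t,θ) = (t',θ'), is differentiable and the determinant of its derivative at (t,θ) equals sin θ / sin θ'. -/
/-!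
With R = e^t / sin θ and C = -e^t cot θ one has R² - (C - 1)² = e^{2t} - 2 e^t cot θ - 1 and
(1 - C) / R = cos θ + e^{-t} sin θ, so Φ is a composition of elementary functions whose four
partial derivatives are explicit. Since sin²θ · (R² - (C - 1)²) = e^{2t} - (sin θ + e^t cos θ)²
= e^{2t} sin²θ', the Jacobian determinant collapses to sin θ / sin θ'.
-/

open Real Filter Topology

theorem LinearMap.det_prod_eq {R : Type*} [CommRing R] (f g : R × R →ₗ[R] R) :
    LinearMap.det (f.prod g) = f (1, 0) * g (0, 1) - f (0, 1) * g (1, 0) := by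
  rw [← LinearMap.det_toMatrix (Module.Basis.finTwoProd R), Matrix.det_fin_two]
  simp [LinearMap.toMatrix_apply]

section PartialDeriv

variable {𝕜 F : Type*} [NontriviallyNormedField 𝕜] [NormedAddCommGroup F] [NormedSpace 𝕜 F]
  {f : 𝕜 × 𝕜 → F} {f' : 𝕜 × 𝕜 →L[𝕜] F} {x y : 𝕜} {a : F}

theorem HasFDerivAt.apply_one_zero_eq (hf : HasFDerivAt f f' (x, y))
    (h : HasDerivAt (fun s ↦ f (s, y)) a x) : f' (1, 0) = a :=
  (hf.comp_hasDerivAt x ((hasDerivAt_id x).prodMk (hasDerivAt_const x y))).unique h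

theorem HasFDerivAt.apply_zero_one_eq (hf : HasFDerivAt f f' (x, y))
    (h : HasDerivAt (fun s ↦ f (x, s)) a y) : f' (0, 1) = a :=
  (hf.comp_hasDerivAt y ((hasDerivAt_const y x).prodMk (hasDerivAt_id y))).unique h

end PartialDeriv

noncomputable section

namespace LiouvilleChart

/-- For the geodesic through `(0, e^t)` at angle `θ`, this is `e^{2t'}`, the squared height of
its intersection with `x = 1`. -/
def heightSq (p : ℝ × ℝ) : ℝ := exp p.1 ^ 2 - 2 * exp p.1 * (cos p.2 / sin p.2) - 1

/-- `cos θ'` for the same geodesic. -/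
def cosAngle (p : ℝ × ℝ) : ℝ := cos p.2 + sin p.2 * exp (-p.1)

def chartChange (p : ℝ × ℝ) : ℝ × ℝ := (1 / 2 * log (heightSq p), arccos (cosAngle p))

variable {t θ : ℝ}

theorem radius_sq_sub_sq_eq_heightSq (hs : sin θ ≠ 0) :
    (exp t / sin θ) ^ 2 - (-(exp t * (cos θ / sin θ)) - 1) ^ 2 = heightSq (t, θ) := by
  simp only [heightSq]
  field_simp
  linear_combination (-exp t ^ 2) * sin_sq_add_cos_sq θ

theorem div_radius_eq_cosAngle (hs : sin θ ≠ 0) :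
    (1 - -(exp t * (cos θ / sin θ))) / (exp t / sin θ) = cosAngle (t, θ) := by
  simp only [cosAngle, exp_neg]
  field_simp
  ring

theorem eventuallyEq_chartChange (hs : sin θ ≠ 0) :
    (fun p : ℝ × ℝ ↦ ((1 / 2) * log ((exp p.1 / sin p.2) ^ 2
          - ((-(exp p.1 * (cos p.2 / sin p.2))) - 1) ^ 2),
        arccos ((1 - (-(exp p.1 * (cos p.2 / sin p.2)))) / (exp p.1 / sin p.2))))
      =ᶠ[𝓝 (t, θ)] chartChange := by
  have : ∀ᶠ p : ℝ × ℝ in 𝓝 (t, θ), sin p.2 ≠ 0 :=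
    (continuous_sin.comp continuous_snd).continuousAt.eventually_ne hs
  filter_upwards [this] with p hp
  rw [chartChange, radius_sq_sub_sq_eq_heightSq hp, div_radius_eq_cosAngle hp]

theorem sin_sq_mul_heightSq (hs : sin θ ≠ 0) :
    sin θ ^ 2 * heightSq (t, θ) = exp t ^ 2 - (sin θ + exp t * cos θ) ^ 2 := by
  simp only [heightSq]
  field_simp
  linear_combination (exp t ^ 2) * sin_sq_add_cos_sq θ

theorem one_sub_cosAngle_sq :
    1 - cosAngle (t, θ) ^ 2 = (exp t ^ 2 - (sin θ + exp t * cos θ) ^ 2) / exp t ^ 2 := by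
  simp only [cosAngle, exp_neg]
  field_simp
  ring

theorem cosAngle_mem_Ioo (hs : sin θ ≠ 0) (hg : 0 < heightSq (t, θ)) :
    cosAngle (t, θ) ∈ Set.Ioo (-1) 1 := by
  have h : 0 < 1 - cosAngle (t, θ) ^ 2 := by
    rw [one_sub_cosAngle_sq, ← sin_sq_mul_heightSq hs]
    positivity
  exact abs_lt.1 ((sq_lt_one_iff_abs_lt_one _).1 (by linarith))

theorem hasDerivAt_heightSq_fst :
    HasDerivAt (fun x ↦ heightSq (x, θ)) (2 * exp t ^ 2 - 2 * exp t * (cos θ / sin θ)) t := by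
  refine ((((hasDerivAt_exp t).pow 2).sub ((hasDerivAt_exp t).const_mul 2 |>.mul_const
    (cos θ / sin θ))).sub_const 1).congr_deriv ?_
  ring

theorem hasDerivAt_heightSq_snd (hs : sin θ ≠ 0) :
    HasDerivAt (fun y ↦ heightSq (t, y)) (2 * exp t / sin θ ^ 2) θ := by
  refine ((((hasDerivAt_cos θ).div (hasDerivAt_sin θ) hs).const_mul (2 * exp t)).const_sub
    (exp t ^ 2) |>.sub_const 1).congr_deriv ?_
  field_simp
  linear_combination sin_sq_add_cos_sq θ

theorem hasDerivAt_cosAngle_fst :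
    HasDerivAt (fun x ↦ cosAngle (x, θ)) (-(sin θ * exp (-t))) t := by
  refine ((((hasDerivAt_neg t).exp).const_mul (sin θ)).const_add (cos θ)).congr_deriv ?_
  ring

theorem hasDerivAt_cosAngle_snd :
    HasDerivAt (fun y ↦ cosAngle (t, y)) (-sin θ + cos θ * exp (-t)) θ :=
  (hasDerivAt_cos θ).add ((hasDerivAt_sin θ).mul_const (exp (-t)))

theorem differentiableAt_log_heightSq (hs : sin θ ≠ 0) (hg : heightSq (t, θ) ≠ 0) :
    DifferentiableAt ℝ (fun p ↦ 1 / 2 * log (heightSq p)) (t, θ) := by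
  have : DifferentiableAt ℝ heightSq (t, θ) := by
    unfold heightSq
    fun_prop (disch := exact hs)
  exact (this.log hg).const_mul _

theorem differentiableAt_arccos_cosAngle (hc : cosAngle (t, θ) ∈ Set.Ioo (-1) 1) :
    DifferentiableAt ℝ (fun p ↦ arccos (cosAngle p)) (t, θ) := by
  have : DifferentiableAt ℝ cosAngle (t, θ) := by
    unfold cosAngle
    fun_prop
  exact (differentiableAt_arccos.2 ⟨hc.1.ne', hc.2.ne⟩).comp (t, θ) this

theorem differentiableAt_chartChange (hs : sin θ ≠ 0) (hg : 0 < heightSq (t, θ)) :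
    DifferentiableAt ℝ chartChange (t, θ) :=
  (differentiableAt_log_heightSq hs hg.ne').prodMk
    (differentiableAt_arccos_cosAngle (cosAngle_mem_Ioo hs hg))

theorem det_fderiv_chartChange (hs : sin θ ≠ 0) (hg : 0 < heightSq (t, θ)) :
    LinearMap.det (fderiv ℝ chartChange (t, θ) : ℝ × ℝ →ₗ[ℝ] ℝ × ℝ)
      = sin θ / √(1 - cosAngle (t, θ) ^ 2) := by
  have hc := cosAngle_mem_Ioo hs hg
  have hT := differentiableAt_log_heightSq hs hg.ne'
  have hA := differentiableAt_arccos_cosAngle hc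
  have harccos := hasDerivAt_arccos hc.1.ne' hc.2.ne
  have hA_fst := harccos.comp t (hasDerivAt_cosAngle_fst (θ := θ))
  have hA_snd := harccos.comp θ (hasDerivAt_cosAngle_snd (t := t))
  have hfderiv : fderiv ℝ chartChange (t, θ) = (fderiv ℝ _ (t, θ)).prod (fderiv ℝ _ (t, θ)) :=
    hT.fderiv_prodMk hA
  rw [hfderiv, ContinuousLinearMap.coe_prod, LinearMap.det_prod_eq]
  simp only [ContinuousLinearMap.coe_coe]
  rw [hT.hasFDerivAt.apply_one_zero_eq ((hasDerivAt_heightSq_fst.log hg.ne').const_mul _),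
    hT.hasFDerivAt.apply_zero_one_eq (((hasDerivAt_heightSq_snd hs).log hg.ne').const_mul _),
    hA.hasFDerivAt.apply_one_zero_eq hA_fst, hA.hasFDerivAt.apply_zero_one_eq hA_snd]
  have hq : √(1 - cosAngle (t, θ) ^ 2) ≠ 0 := (sqrt_pos.2 (by nlinarith [hc.1, hc.2])).ne'
  rw [exp_neg]
  field_simp
  rw [sin_sq_mul_heightSq hs]
  linear_combination (exp t ^ 2 + 1) * sin_sq_add_cos_sq θ

end LiouvilleChart

end

open LiouvilleChart in
/-- Change of charts for the Liouville measure: with R = e^t/sin θ, C = −e^t·cot θ,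
t' = (1/2)·log(R² − (C−1)²), θ' = arccos((1−C)/R), the map Φ(t,θ) = (t',θ') is
differentiable on U = {(t,θ) : θ ∈ (0,π), (1 + e^t·cot θ)² < e^{2t}/sin²θ} and the
determinant of its derivative is sin θ / sin θ', with θ' ∈ (0,π). -/
theorem jacobian_chart_change (t θ : ℝ) (hθ : θ ∈ Set.Ioo 0 π)
    (hU : (1 + Real.exp t * (Real.cos θ / Real.sin θ)) ^ 2
        < Real.exp (2 * t) / (Real.sin θ) ^ 2) :
    let Φ : ℝ × ℝ → ℝ × ℝ := fun p =>
      ((1 / 2) * Real.log ((Real.exp p.1 / Real.sin p.2) ^ 2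
          - ((-(Real.exp p.1 * (Real.cos p.2 / Real.sin p.2))) - 1) ^ 2),
        Real.arccos ((1 - (-(Real.exp p.1 * (Real.cos p.2 / Real.sin p.2))))
          / (Real.exp p.1 / Real.sin p.2)))
    (Φ (t, θ)).2 ∈ Set.Ioo 0 π ∧
    DifferentiableAt ℝ Φ (t, θ) ∧
    LinearMap.det
      ((fderiv ℝ Φ (t, θ) : (ℝ × ℝ) →L[ℝ] (ℝ × ℝ)) : (ℝ × ℝ) →ₗ[ℝ] (ℝ × ℝ)) =
      Real.sin θ / Real.sin (Φ (t, θ)).2 := by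
  intro Φ
  have hs : sin θ ≠ 0 := (sin_pos_of_pos_of_lt_pi hθ.1 hθ.2).ne'
  have hg : 0 < heightSq (t, θ) := by
    rw [← radius_sq_sub_sq_eq_heightSq hs, div_pow, ← exp_nat_mul, sub_pos]
    convert hU using 1 <;> push_cast <;> ring
  have hc := cosAngle_mem_Ioo hs hg
  have hΦ : Φ =ᶠ[𝓝 (t, θ)] chartChange := eventuallyEq_chartChange hs
  have hΦ₂ : (Φ (t, θ)).2 = arccos (cosAngle (t, θ)) := congrArg Prod.snd hΦ.eq_of_nhds
  refine ⟨?_, (differentiableAt_chartChange hs hg).congr_of_eventuallyEq hΦ, ?_⟩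
  · rw [hΦ₂]
    exact ⟨arccos_pos.2 hc.2, arccos_lt_pi.2 hc.1⟩
  · rw [hΦ.fderiv_eq, det_fderiv_chartChange hs hg, hΦ₂, sin_arccos]
end

section
/- Let A ∈ SL(2,ℤ) with tr A = 2 and A ≠ 1. Then there exist B ∈ SL(2,ℤ) and a non-zero integer n such that B·A·B⁻¹ is the matrix with rows (1, n) and (0, 1). -/
/-!
Since `det (A - 1) = det A - tr A + 1 = 0`, the matrix `A` fixes a non-zero integer vector, and
dividing by the gcd of its entries, a primitive one `v`. If `g ∈ SL(2, ℤ)` has first column `v`,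
then `g⁻¹ A g` fixes the first basis vector, so it is upper unitriangular; it is not the identity
because `A` is not.
-/

open Matrix MatrixGroups

lemma Matrix.det_sub_one_fin_two {R : Type*} [CommRing R] (M : Matrix (Fin 2) (Fin 2) R) :
    (M - 1).det = M.det - M.trace + 1 := by
  simp only [det_fin_two, trace_fin_two, sub_apply, one_apply_eq, ne_eq, zero_ne_one,
    one_ne_zero, not_false_eq_true, one_apply_ne, sub_zero]
  ring

lemma Int.exists_isCoprime_smul_eq {v : Fin 2 → ℤ} (hv : v ≠ 0) :
    ∃ (g : ℤ) (w : Fin 2 → ℤ), g ≠ 0 ∧ IsCoprime (w 0) (w 1) ∧ v = g • w := by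
  have hgcd : 0 < Int.gcd (v 0) (v 1) := by
    refine Int.gcd_pos_iff.mpr (not_and_or.mp fun h => hv ?_)
    ext i; fin_cases i <;> simp [h.1, h.2]
  obtain ⟨g, a, b, hg, hab, ha, hb⟩ := Int.exists_gcd_one' hgcd
  refine ⟨g, ![a, b], by positivity, Int.isCoprime_iff_gcd_eq_one.mpr hab, ?_⟩
  ext i; fin_cases i <;> simp [ha, hb, mul_comm]

lemma Matrix.exists_isCoprime_mulVec_eq_zero_of_det_eq_zero {N : Matrix (Fin 2) (Fin 2) ℤ}
    (hN : N.det = 0) : ∃ v : Fin 2 → ℤ, IsCoprime (v 0) (v 1) ∧ N *ᵥ v = 0 := by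
  obtain ⟨u, hu, hNu⟩ := exists_mulVec_eq_zero_iff.mpr hN
  obtain ⟨g, v, hg, hv, rfl⟩ := Int.exists_isCoprime_smul_eq hu
  rw [mulVec_smul] at hNu
  exact ⟨v, hv, (smul_eq_zero.mp hNu).resolve_left hg⟩

namespace Matrix.SpecialLinearGroup

variable {R : Type*} [CommRing R]

lemma coe_eq_shear_of_mulVec_single_zero (C : SL(2, R))
    (hC : (C : Matrix (Fin 2) (Fin 2) R) *ᵥ Pi.single 0 1 = Pi.single 0 1) :
    (C : Matrix (Fin 2) (Fin 2) R) = !![1, C 0 1; 0, 1] := by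
  have h00 : C 0 0 = 1 := by simpa [mulVec_single_one] using congrFun hC 0
  have h10 : C 1 0 = 0 := by simpa [mulVec_single_one] using congrFun hC 1
  have h11 : C 1 1 = 1 := by
    have hdet := C.det_coe
    rwa [det_fin_two, h00, h10, one_mul, mul_zero, sub_zero] at hdet
  ext i j; fin_cases i <;> fin_cases j <;> simp [h00, h10, h11]

lemma exists_conj_eq_shear_of_mulVec_eq_self (A : SL(2, R)) {v : Fin 2 → R}
    (hv : IsCoprime (v 0) (v 1)) (hAv : (A : Matrix (Fin 2) (Fin 2) R) *ᵥ v = v) :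
    ∃ (B : SL(2, R)) (n : R),
      ((B * A * B⁻¹ : SL(2, R)) : Matrix (Fin 2) (Fin 2) R) = !![1, n; 0, 1] := by
  obtain ⟨g, hg0, hg1⟩ := hv.exists_SL2_col 0
  have hg : (g : Matrix (Fin 2) (Fin 2) R) *ᵥ Pi.single 0 1 = v := by
    ext i; fin_cases i <;> simp [hg0, hg1]
  have hC : ((g⁻¹ * A * g : SL(2, R)) : Matrix (Fin 2) (Fin 2) R) *ᵥ Pi.single 0 1 =
      Pi.single 0 1 := by
    rw [coe_mul, coe_mul, ← mulVec_mulVec, hg, ← mulVec_mulVec, hAv, ← hg, mulVec_mulVec,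
      ← coe_mul, inv_mul_cancel, coe_one, one_mulVec]
  refine ⟨g⁻¹, (g⁻¹ * A * g : SL(2, R)) 0 1, ?_⟩
  rw [inv_inv]
  exact coe_eq_shear_of_mulVec_single_zero _ hC

end Matrix.SpecialLinearGroup

/-- An element of SL(2,ℤ) with trace 2 which is not the identity is conjugate in SL(2,ℤ)
to the shear matrix !![1, n; 0, 1] for some non-zero integer n. -/
theorem parabolic_sl2z_conjugate_shear (A : Matrix.SpecialLinearGroup (Fin 2) ℤ)
    (htr : Matrix.trace (A : Matrix (Fin 2) (Fin 2) ℤ) = 2) (hA : A ≠ 1) :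
    ∃ (B : Matrix.SpecialLinearGroup (Fin 2) ℤ) (n : ℤ), n ≠ 0 ∧
      ((B * A * B⁻¹ : Matrix.SpecialLinearGroup (Fin 2) ℤ) : Matrix (Fin 2) (Fin 2) ℤ)
        = !![1, n; 0, 1] := by
  have hdet : ((A : Matrix (Fin 2) (Fin 2) ℤ) - 1).det = 0 := by
    rw [det_sub_one_fin_two, A.det_coe, htr]
    norm_num
  obtain ⟨v, hv, hAv⟩ := exists_isCoprime_mulVec_eq_zero_of_det_eq_zero hdet
  rw [sub_mulVec, one_mulVec, sub_eq_zero] at hAv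
  obtain ⟨B, n, hB⟩ := A.exists_conj_eq_shear_of_mulVec_eq_self hv hAv
  refine ⟨B, n, ?_, hB⟩
  rintro rfl
  exact hA (conj_eq_one_iff.mp (Subtype.ext (hB.trans one_fin_two.symm)))
end
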